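/- arXiv:1911.07235 — 3 statements merged into one kernel-verified Lean document; each statement's English description precedes it below -/
import Mathlib

section
/- Fix x ∈ W of positive level and ν ∈ Φ_fin. Then the set of corners of the lower graph Γ_{x,ν} is finite; that is, there are only finitely many positive double affine roots α with fin(α) = ν and x^{−1}(α) < 0 that are corners of Γ_{x,ν}. -/
/-!
Common framework for the double affine Weyl semigroup of Welch,
"Double Affine Bruhat Order".

Encoding conventions:
* `P` is the finite weight lattice `P_fin` (an additive abelian group) equipped with
  an integer-valued pairing `pair` (the normalized simply-laced pairing, identifying
  roots and coroots).
* A finite root is an element of the set `Φfin ⊆ P`; `finPos` is the set of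
  positive finite roots.
* An affine root `ν + rδ` is encoded as the pair `(ν, r) : P × ℤ`.
* An affine weight `ζ = μ + mδ + lΛ₀ ∈ X` is encoded as `(μ, m, l) : P × ℤ × ℤ`.
* A double affine root `ν + rδ + jπ` is encoded as `(ν, r, j) : P × ℤ × ℤ`.
* `G` is the affine Weyl group `W_aff` (an abstract group), acting on affine
  roots via `ract` and on `X` via `xact`; `saff α̃` is the reflection `s_{α̃}`,
  `Ytr λ` is the translation `Y^λ`.
* An element `X^ζ w̃` of the group `X ⋊ W_aff` (in particular of the double affine
  Weyl semigroup `W`, whose elements are those with `ζ` in the Tits cone) is encoded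
  as the pair `(ζ, w̃) : (P × ℤ × ℤ) × G`.
-/

namespace DoubleAffineBruhat

/-- Positivity of an affine root `ν + rδ`, encoded as the pair `(ν, r)`:
`ν + rδ > 0` iff `r > 0`, or `r = 0` and `ν` is a positive finite root. -/
def aPos {P : Type} (finPos : Set P) (a : P × ℤ) : Prop :=
  0 < a.2 ∨ (a.2 = 0 ∧ a.1 ∈ finPos)

/-- The pairing of an affine weight `ζ = μ + mδ + lΛ₀`, encoded as `(μ, m, l)`,
with an affine root `ν + rδ`, encoded as `(ν, r)`:
`⟨ζ, ν + rδ⟩ = ⟨μ, ν⟩ + l·r`. -/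
def xpair {P : Type} (pair : P → P → ℤ) (ζ : P × ℤ × ℤ) (a : P × ℤ) : ℤ :=
  pair ζ.1 a.1 + ζ.2.2 * a.2

/-- The level of an affine weight. -/
def level {P : Type} (ζ : P × ℤ × ℤ) : ℤ := ζ.2.2

/-- The Tits cone `𝒯 = {mδ : m ∈ ℤ} ∪ {μ + mδ + lΛ₀ : l > 0}`. -/
def Tits (P : Type) [AddCommGroup P] : Set (P × ℤ × ℤ) :=
  {ζ | (ζ.1 = 0 ∧ ζ.2.2 = 0) ∨ 0 < ζ.2.2}

/-- Positivity of a double affine root `α = α̃ + jπ` encoded as `(ν, r, j)`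
(with `α̃ = ν + rδ`): positive iff (`α̃ > 0` and `j ≥ 0`) or (`α̃ < 0` and `j > 0`). -/
def dPos {P : Type} [AddCommGroup P] (finPos : Set P) (a : P × ℤ × ℤ) : Prop :=
  (aPos finPos (a.1, a.2.1) ∧ 0 ≤ a.2.2) ∨ (aPos finPos (-a.1, -a.2.1) ∧ 0 < a.2.2)

variable {P G : Type} [AddCommGroup P] [Group G]

/-- Multiplication in the group `X ⋊ W_aff`:
`(X^ζ g)(X^η h) = X^{ζ + gη} (gh)`, where `xact` is the action of `W_aff` on `X`. -/
def dwmul (xact : G → P × ℤ × ℤ → P × ℤ × ℤ) (x y : (P × ℤ × ℤ) × G) :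
    (P × ℤ × ℤ) × G :=
  (x.1 + xact x.2 y.1, x.2 * y.2)

/-- Inversion in the group `X ⋊ W_aff`: `(X^ζ g)⁻¹ = X^{-g⁻¹ζ} g⁻¹`. -/
def dwinv (xact : G → P × ℤ × ℤ → P × ℤ × ℤ) (x : (P × ℤ × ℤ) × G) :
    (P × ℤ × ℤ) × G :=
  (-(xact x.2⁻¹ x.1), x.2⁻¹)

/-- Action of `X^ζ g ∈ X ⋊ W_aff` on double affine roots:
`X^ζ g (α̃ + jπ) = g(α̃) + (j - ⟨ζ, g(α̃)⟩)π`, where `ract` is the action of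
`W_aff` on affine roots. -/
def dact (pair : P → P → ℤ) (ract : G → P × ℤ → P × ℤ)
    (x : (P × ℤ × ℤ) × G) (a : P × ℤ × ℤ) : P × ℤ × ℤ :=
  ((ract x.2 (a.1, a.2.1)).1, (ract x.2 (a.1, a.2.1)).2,
    a.2.2 - xpair pair x.1 (ract x.2 (a.1, a.2.1)))

/-- The reflection `s_α = X^{-j(ν + rδ)} s_{ν + rδ} ∈ X ⋊ W_aff` associated to the
double affine root `α = ν + rδ + jπ`. -/
def dref (saff : P × ℤ → G) (a : P × ℤ × ℤ) : (P × ℤ × ℤ) × G :=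
  ((-a.2.2 • a.1, -(a.2.2 * a.2.1), 0), saff (a.1, a.2.1))

/-- All the data of the double affine setting together with the structural facts
that hold in it (context facts; `Φ_fin` irreducible and simply laced, normalized
pairing, Coxeter facts for `W_aff`, etc.). -/
structure Ctx (P G : Type) [AddCommGroup P] [Group G] where
  /-- the normalized pairing on the finite weight lattice -/
  pair : P → P → ℤ
  /-- the set of finite roots `Φ_fin` -/
  Φfin : Set P
  /-- the set of positive finite roots -/
  finPos : Set P
  /-- the number of finite simple roots (the affine simple roots are `α_0, …, α_n`) -/
  n : ℕ
  /-- the affine simple roots `α_0, …, α_n` -/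
  simple : Fin (n + 1) → P × ℤ
  /-- the action of `W_aff` on affine roots -/
  ract : G → P × ℤ → P × ℤ
  /-- the action of `W_aff` on the affine weight lattice `X` -/
  xact : G → P × ℤ × ℤ → P × ℤ × ℤ
  /-- the reflection `s_{α̃} ∈ W_aff` of an affine root `α̃` -/
  saff : P × ℤ → G
  /-- the translation `Y^λ ∈ W_aff` -/
  Ytr : P → G
  /-- the linear functional `⟨·, 2ρ⟩`, `ρ` the sum of the affine fundamental weights;
  an affine root `ν + rδ` is paired as the weight `(ν, r, 0)` -/
  rho2 : P × ℤ × ℤ → ℤ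
  /-- `ζ ↦ ζ₊`, the dominant representative of the `W_aff`-orbit of `ζ` (for `ζ ∈ 𝒯`) -/
  domRep : P × ℤ × ℤ → P × ℤ × ℤ
  pair_add_left : ∀ μ ν γ, pair (μ + ν) γ = pair μ γ + pair ν γ
  pair_add_right : ∀ μ ν γ, pair μ (ν + γ) = pair μ ν + pair μ γ
  pair_symm : ∀ μ ν, pair μ ν = pair ν μ
  pair_norm : ∀ ν ∈ Φfin, pair ν ν = 2
  pair_bound : ∀ ν ∈ Φfin, ∀ γ ∈ Φfin, pair ν γ ≤ 2
  pair_two_eq : ∀ ν ∈ Φfin, ∀ γ ∈ Φfin, pair ν γ = 2 → ν = γ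
  root_neg : ∀ ν ∈ Φfin, -ν ∈ Φfin
  pos_trichotomy : ∀ ν ∈ Φfin, (ν ∈ finPos ↔ ¬(-ν ∈ finPos))
  simple_root : ∀ i, (simple i).1 ∈ Φfin
  simple_pos : ∀ i, aPos finPos (simple i)
  ract_one : ∀ a, ract 1 a = a
  ract_mul : ∀ g h a, ract (g * h) a = ract g (ract h a)
  ract_neg : ∀ g a, ract g (-a) = -(ract g a)
  ract_root : ∀ g (a : P × ℤ), a.1 ∈ Φfin → (ract g a).1 ∈ Φfin
  xact_one : ∀ ζ, xact 1 ζ = ζ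
  xact_mul : ∀ g h ζ, xact (g * h) ζ = xact g (xact h ζ)
  xact_add : ∀ g ζ η, xact g (ζ + η) = xact g ζ + xact g η
  xact_level : ∀ g ζ, (xact g ζ).2.2 = ζ.2.2
  xact_pair : ∀ g ζ a, xpair pair (xact g ζ) (ract g a) = xpair pair ζ a
  saff_act : ∀ (ν : P) (r : ℤ) (γ : P) (p : ℤ),
    ract (saff (ν, r)) (γ, p) = (γ - pair ν γ • ν, p - r * pair ν γ)
  saff_invol : ∀ a : P × ℤ, saff a * saff a = 1
  saff_neg : ∀ a : P × ℤ, saff (-a) = saff a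
  Ytr_act : ∀ (lam ν : P) (r : ℤ), ract (Ytr lam) (ν, r) = (ν, r - pair lam ν)
  decomp : ∀ g : G, ∃ (lam : P) (wf : G), g = Ytr lam * wf ∧
    ∀ (ν : P) (r : ℤ), ract wf (ν, r) = ((ract wf (ν, 0)).1, r)
  invFin : ∀ g : G,
    {a : P × ℤ | a.1 ∈ Φfin ∧ aPos finPos a ∧ aPos finPos (-(ract g a))}.Finite
  domRep_mem : ∀ ζ : P × ℤ × ℤ, ζ ∈ Tits P → ∃ g : G, xact g ζ = domRep ζ
  domRep_dom : ∀ ζ : P × ℤ × ℤ, ζ ∈ Tits P → ∀ i, 0 ≤ xpair pair (domRep ζ) (simple i)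
  domRep_eq : ∀ ζ : P × ℤ × ℤ, ζ ∈ Tits P →
    ∀ g : G, (∀ i, 0 ≤ xpair pair (xact g ζ) (simple i)) → xact g ζ = domRep ζ
  rho2_add : ∀ ζ η, rho2 (ζ + η) = rho2 ζ + rho2 η
  rho2_simple : ∀ i, rho2 ((simple i).1, (simple i).2, 0) = 2

/-- The inversion set `Inv(g) = {α̃ ∈ Φ_aff : α̃ > 0, g(α̃) < 0}`. -/
def InvA (C : Ctx P G) (g : G) : Set (P × ℤ) :=
  {a | a.1 ∈ C.Φfin ∧ aPos C.finPos a ∧ aPos C.finPos (-(C.ract g a))}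

/-- The Coxeter length of `g ∈ W_aff`, via `ℓ(g) = |Inv(g)|`. -/
noncomputable def alen (C : Ctx P G) (g : G) : ℤ := ((InvA C g).ncard : ℤ)

/-- `ζ ∈ X` is dominant: `⟨ζ, α_i⟩ ≥ 0` for all affine simple roots. -/
def dominant (C : Ctx P G) (ζ : P × ℤ × ℤ) : Prop :=
  ∀ i, 0 ≤ xpair C.pair ζ (C.simple i)

/-- `ζ ∈ X` is regular: `⟨ζ, α̃⟩ ≠ 0` for all affine roots `α̃`. -/
def regular (C : Ctx P G) (ζ : P × ℤ × ℤ) : Prop :=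
  ∀ a : P × ℤ, a.1 ∈ C.Φfin → xpair C.pair ζ a ≠ 0

/-- The length of `x = X^ζ w̃ ∈ W`:
`ℓ(x) = ⟨ζ₊, 2ρ⟩ + #{α̃ ∈ Inv(w̃⁻¹) : ⟨ζ, α̃⟩ ≤ 0} - #{α̃ ∈ Inv(w̃⁻¹) : ⟨ζ, α̃⟩ > 0}`. -/
noncomputable def dlen (C : Ctx P G) (x : (P × ℤ × ℤ) × G) : ℤ :=
  C.rho2 (C.domRep x.1)
    + ((InvA C x.2⁻¹ ∩ {a | xpair C.pair x.1 a ≤ 0}).ncard : ℤ)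
    - ((InvA C x.2⁻¹ ∩ {a | 0 < xpair C.pair x.1 a}).ncard : ℤ)

/-- One generating step of the double affine Bruhat order:
`bstep C x y` holds iff `x` has positive level and `y = s_α x` for some positive
double affine root `α` with `x⁻¹(α) < 0`. -/
def bstep (C : Ctx P G) (x y : (P × ℤ × ℤ) × G) : Prop :=
  0 < level x.1 ∧ ∃ a : P × ℤ × ℤ, a.1 ∈ C.Φfin ∧ dPos C.finPos a ∧
    dPos C.finPos (-(dact C.pair C.ract (dwinv C.xact x) a)) ∧
    y = dwmul C.xact (dref C.saff a) x

/-- `bge C x y` means `x ≥ y` in the double affine Bruhat order (the order generated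
by the relations `s_α x < x`). -/
def bge (C : Ctx P G) (x y : (P × ℤ × ℤ) × G) : Prop :=
  Relation.ReflTransGen (bstep C) x y

/-- `blt C y x` means `y < x` in the double affine Bruhat order. -/
def blt (C : Ctx P G) (y x : (P × ℤ × ℤ) × G) : Prop :=
  bge C x y ∧ y ≠ x

/-- `y` is a cocover of `x`: `y < x` and there is no `z` with `y < z < x`. -/
def cocover (C : Ctx P G) (y x : (P × ℤ × ℤ) × G) : Prop :=
  blt C y x ∧ ¬∃ z : (P × ℤ × ℤ) × G, blt C y z ∧ blt C z x

/-- A double affine root `b` "corresponds to a point of the lower graph of `x`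
(corresponding to `fin b`)": `b > 0` and `x⁻¹(b) < 0`. -/
def inGraph (C : Ctx P G) (x : (P × ℤ × ℤ) × G) (b : P × ℤ × ℤ) : Prop :=
  dPos C.finPos b ∧ dPos C.finPos (-(dact C.pair C.ract (dwinv C.xact x) b))

/-- The lower graph `Γ_{x,ν} = {(r,j) : ν + rδ + jπ > 0 and x⁻¹(ν + rδ + jπ) < 0}`. -/
def Gamma (C : Ctx P G) (x : (P × ℤ × ℤ) × G) (ν : P) : Set (ℤ × ℤ) :=
  {rj | inGraph C x (ν, rj.1, rj.2)}

/-- `a` is a corner of the lower graph `Γ_{x, fin(a)}`. -/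
def IsCorner (C : Ctx P G) (x : (P × ℤ × ℤ) × G) (a : P × ℤ × ℤ) : Prop :=
  inGraph C x a ∧
    ∀ b : P × ℤ × ℤ, b.1 = a.1 → b ≠ a → inGraph C x b →
      ¬ inGraph C x (-(dact C.pair C.ract (dref C.saff a) b))

/-- The length difference set
`L_{x,α} = {β ∈ Φ : β > 0, x⁻¹(β) < 0, s_α(β) < 0, x⁻¹ s_α(β) > 0}`. -/
def Ldiff (C : Ctx P G) (x : (P × ℤ × ℤ) × G) (a : P × ℤ × ℤ) :
    Set (P × ℤ × ℤ) :=
  {b | b.1 ∈ C.Φfin ∧ dPos C.finPos b ∧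
    dPos C.finPos (-(dact C.pair C.ract (dwinv C.xact x) b)) ∧
    dPos C.finPos (-(dact C.pair C.ract (dref C.saff a) b)) ∧
    dPos C.finPos (dact C.pair C.ract (dwinv C.xact x) (dact C.pair C.ract (dref C.saff a) b))}

/-!
Write the points of `Γ_{x,ν}` as `(r, j)` and put `m = ⟨μ, ν⟩`, where `x = X^{μ + kδ + lΛ₀} w̃`.
The reflection `-s_α` acts on `Γ_{x,ν}` as the point reflection through `α`, so a corner is a
point of the graph that is not the midpoint of two other points. Positivity of `α` and of
`-x⁻¹(α)` confines the graph to the region `0 ≤ j ≤ -m - l r`, which is bounded on the right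
because `l > 0`; far to the left the graph is exactly the strip `1 ≤ j ≤ -m - l r`, all of whose
points are midpoints. Hence the corners lie in a bounded box.
-/

def IsLatticeCorner (S : Set (ℤ × ℤ)) (z : ℤ × ℤ) : Prop :=
  z ∈ S ∧ ∀ w ∈ S, w ≠ z → (2 * z.1 - w.1, 2 * z.2 - w.2) ∉ S

section LatticeCorner

variable (S : Set (ℤ × ℤ)) {m l R : ℤ}

/- A point of the strip is the midpoint of a vertical pair, of two points on the bottom row
`j = 1`, or of two points on the upper boundary line. -/
theorem not_isLatticeCorner_of_add_two_le (hl : 0 < l)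
    (hlow : ∀ z : ℤ × ℤ, z.1 < R → (z ∈ S ↔ 1 ≤ z.2 ∧ z.2 + (m + l * z.1) ≤ 0))
    {r j : ℤ} (hr : r + 2 ≤ min (min R 0) (-m)) : ¬ IsLatticeCorner S (r, j) := by
  rintro ⟨hz, hcorner⟩
  suffices ∃ w ∈ S, w ≠ (r, j) ∧ (2 * r - w.1, 2 * j - w.2) ∈ S by
    obtain ⟨w, hw, hne, hw'⟩ := this
    exact hcorner w hw hne hw'
  have mem (p q : ℤ) (hp : p < R) : (p, q) ∈ S ↔ 1 ≤ q ∧ q + (m + l * p) ≤ 0 := hlow (p, q) hp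
  obtain ⟨hj, htop⟩ := (mem r j (by omega)).1 hz
  have hnext : m + l * (r + 1) ≤ -1 := by
    nlinarith [mul_nonneg (sub_nonneg.2 hl) (show 0 ≤ -(r + 1) by omega),
      show r + 2 ≤ -m by omega]
  rcases (show j = 1 ∨ (2 ≤ j ∧ j + 1 + (m + l * r) ≤ 0) ∨ j + (m + l * r) = 0 by omega) with
    hbottom | ⟨htwo, hinterior⟩ | hboundary
  · subst hbottom
    refine ⟨(r - 1, 1), (mem _ _ (by omega)).2 ⟨le_rfl, by nlinarith⟩, by simp, ?_⟩
    exact (mem _ _ (by omega)).2 ⟨by omega, by linarith⟩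
  · refine ⟨(r, j - 1), (mem _ _ (by omega)).2 ⟨by omega, by linarith⟩, by simp, ?_⟩
    exact (mem _ _ (by omega)).2 ⟨by omega, by linarith⟩
  · refine ⟨(r + 1, j - l), (mem _ _ (by omega)).2 ⟨by linarith, by linarith⟩, by simp, ?_⟩
    exact (mem _ _ (by omega)).2 ⟨by omega, by linarith⟩

theorem setOf_isLatticeCorner_finite (hl : 0 < l)
    (hbounds : ∀ z ∈ S, 0 ≤ z.2 ∧ z.2 + (m + l * z.1) ≤ 0)
    (hlow : ∀ z : ℤ × ℤ, z.1 < R → (z ∈ S ↔ 1 ≤ z.2 ∧ z.2 + (m + l * z.1) ≤ 0)) :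
    {z | IsLatticeCorner S z}.Finite := by
  set r₀ := min (min R 0) (-m) - 1
  refine ((Set.finite_Icc r₀ (max 0 (-m))).prod (Set.finite_Icc 0 (-m - l * r₀))).subset ?_
  rintro ⟨r, j⟩ hcorner
  have hr : r₀ ≤ r := by
    by_contra! h
    exact not_isLatticeCorner_of_add_two_le S hl hlow (by omega) hcorner
  obtain ⟨hj, htop⟩ := hbounds _ hcorner.1
  have hlr : l * r₀ ≤ l * r := mul_le_mul_of_nonneg_left hr hl.le
  have hr_le : r ≤ max 0 (-m) := by
    rcases le_or_gt r 0 with h | h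
    · exact le_max_of_le_left h
    · exact le_max_of_le_right (by nlinarith)
  exact ⟨⟨hr, hr_le⟩, hj, by simp only at htop ⊢; linarith⟩

end LatticeCorner

theorem dPos_iff_of_neg {finPos : Set P} {w : P} {p q : ℤ}
    (hp : p < 0) : dPos finPos (w, p, q) ↔ 1 ≤ q := by
  simp only [dPos, aPos]
  constructor
  · rintro (⟨(h | ⟨h, -⟩), hq⟩ | ⟨-, hq⟩) <;> omega
  · exact fun hq ↦ Or.inr ⟨Or.inl (by omega), by omega⟩

theorem dPos_iff_of_pos {finPos : Set P} {w : P} {p q : ℤ}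
    (hp : 0 < p) : dPos finPos (w, p, q) ↔ 0 ≤ q := by
  simp only [dPos, aPos]
  constructor
  · rintro (⟨-, hq⟩ | ⟨(h | ⟨h, -⟩), hq⟩) <;> omega
  · exact fun hq ↦ Or.inl ⟨Or.inl hp, hq⟩

theorem dPos.nonneg {finPos : Set P} {b : P × ℤ × ℤ}
    (h : dPos finPos b) : 0 ≤ b.2.2 := by
  rcases h with ⟨-, hq⟩ | ⟨-, hq⟩ <;> omega

namespace Ctx

variable (C : Ctx P G)

def pairLeft (γ : P) : P →+ ℤ :=
  AddMonoidHom.mk' (C.pair · γ) (fun μ ν ↦ C.pair_add_left μ ν γ)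

theorem pair_neg_left (μ γ : P) : C.pair (-μ) γ = -C.pair μ γ :=
  map_neg (C.pairLeft γ) μ

theorem pair_zsmul_left (n : ℤ) (μ γ : P) : C.pair (n • μ) γ = n * C.pair μ γ :=
  map_zsmul (C.pairLeft γ) n μ

theorem xpair_neg (η : P × ℤ × ℤ) (a : P × ℤ) :
    xpair C.pair (-η) a = -xpair C.pair η a := by
  simp only [xpair, Prod.fst_neg, Prod.snd_neg, pair_neg_left]
  ring

theorem exists_ract_eq (g : G) (ν : P) :
    ∃ (ν' : P) (c : ℤ), ∀ p, C.ract g (ν, p) = (ν', p - c) := by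
  obtain ⟨lam, wf, rfl, hwf⟩ := C.decomp g
  exact ⟨_, _, fun p ↦ by rw [C.ract_mul, hwf, C.Ytr_act]⟩

theorem exists_dact_dwinv_eq (x : (P × ℤ × ℤ) × G) (ν : P) :
    ∃ (ν' : P) (c : ℤ), ∀ p q, dact C.pair C.ract (dwinv C.xact x) (ν, p, q) =
      (ν', p - c, q + (C.pair x.1.1 ν + level x.1 * p)) := by
  obtain ⟨ν', c, hract⟩ := C.exists_ract_eq x.2⁻¹ ν
  refine ⟨ν', c, fun p q ↦ ?_⟩
  have hpair :
      xpair C.pair (C.xact x.2⁻¹ x.1) (ν', p - c) = C.pair x.1.1 ν + level x.1 * p := by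
    rw [← hract, C.xact_pair]
    rfl
  simp only [dact, dwinv, hract, xpair_neg, hpair, sub_neg_eq_add]

theorem neg_dact_dref_self {ν : P} (hν : ν ∈ C.Φfin) (r j p q : ℤ) :
    -dact C.pair C.ract (dref C.saff (ν, r, j)) (ν, p, q) = (ν, 2 * r - p, 2 * j - q) := by
  have hs : C.ract (C.saff (ν, r)) (ν, p) = (-ν, p - 2 * r) := by
    rw [C.saff_act, C.pair_norm ν hν, two_zsmul, mul_comm]
    simp
  have hpair : C.pair ((-j) • ν) (-ν) = 2 * j := by
    rw [pair_zsmul_left, C.pair_symm, pair_neg_left, C.pair_norm ν hν]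
    ring
  simp only [dact, dref, hs, xpair, hpair, Prod.neg_mk, neg_neg]
  exact Prod.ext rfl (Prod.ext (by ring) (by ring))

theorem mem_gamma_bounds (x : (P × ℤ × ℤ) × G) (ν : P) :
    ∀ z ∈ Gamma C x ν, 0 ≤ z.2 ∧ z.2 + (C.pair x.1.1 ν + level x.1 * z.1) ≤ 0 := by
  obtain ⟨ν', c, hx⟩ := C.exists_dact_dwinv_eq x ν
  rintro ⟨p, q⟩ ⟨hpos, hneg⟩
  rw [hx] at hneg
  have := hneg.nonneg
  simp only [Prod.neg_mk, neg_nonneg] at this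
  exact ⟨hpos.nonneg, this⟩

/- Left of `min c 0`, where `x⁻¹` sends `ν + rδ` to `ν' + (r - c)δ`, the signs of `α` and of
`x⁻¹(α)` are decided by their `π`-coordinates alone. -/
theorem exists_mem_gamma_iff_of_lt (x : (P × ℤ × ℤ) × G) (ν : P) :
    ∃ R, ∀ z : ℤ × ℤ, z.1 < R →
      (z ∈ Gamma C x ν ↔ 1 ≤ z.2 ∧ z.2 + (C.pair x.1.1 ν + level x.1 * z.1) ≤ 0) := by
  obtain ⟨ν', c, hx⟩ := C.exists_dact_dwinv_eq x ν
  refine ⟨min c 0, fun ⟨p, q⟩ hp ↦ ?_⟩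
  simp only [lt_min_iff] at hp
  have hneg : -((ν', p - c, q + (C.pair x.1.1 ν + level x.1 * p)) : P × ℤ × ℤ) =
      (-ν', c - p, -(q + (C.pair x.1.1 ν + level x.1 * p))) := by
    simp only [Prod.neg_mk, neg_sub]
  change inGraph C x (ν, p, q) ↔ _
  rw [inGraph, hx, hneg, dPos_iff_of_neg hp.2, dPos_iff_of_pos (by omega)]
  simp only [neg_nonneg]

end Ctx

theorem IsCorner.isLatticeCorner {C : Ctx P G} {x : (P × ℤ × ℤ) × G} {ν : P} {r j : ℤ}
    (h : IsCorner C x (ν, r, j)) (hν : ν ∈ C.Φfin) : IsLatticeCorner (Gamma C x ν) (r, j) := by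
  refine ⟨h.1, fun ⟨p, q⟩ hw hne hw' ↦ h.2 (ν, p, q) rfl (by simpa using hne) hw ?_⟩
  rwa [C.neg_dact_dref_self hν]

theorem statement5_general {P G : Type} [AddCommGroup P] [Group G] (C : Ctx P G)
    (x : (P × ℤ × ℤ) × G) (hxl : 0 < level x.1)
    (ν : P) (hν : ν ∈ C.Φfin) :
    {a : P × ℤ × ℤ | a.1 = ν ∧ dPos C.finPos a ∧
        dPos C.finPos (-(dact C.pair C.ract (dwinv C.xact x) a)) ∧
        IsCorner C x a}.Finite := by
  obtain ⟨R, hlow⟩ := C.exists_mem_gamma_iff_of_lt x ν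
  have hfinite := setOf_isLatticeCorner_finite _ hxl (C.mem_gamma_bounds x ν) hlow
  refine (hfinite.image fun z ↦ ((ν, z) : P × ℤ × ℤ)).subset ?_
  rintro ⟨_, r, j⟩ ⟨rfl, -, -, hcorner⟩
  exact ⟨(r, j), hcorner.isLatticeCorner hν, rfl⟩

/-- for fixed `x ∈ W` of positive level and `ν ∈ Φ_fin`, there are only
finitely many positive double affine roots `α` with `fin(α) = ν` and `x⁻¹(α) < 0`
that are corners of the lower graph `Γ_{x,ν}`. -/
theorem statement5 {P G : Type} [AddCommGroup P] [Group G] (C : Ctx P G)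
    (x : (P × ℤ × ℤ) × G) (hxW : x.1 ∈ Tits P) (hxl : 0 < level x.1)
    (ν : P) (hν : ν ∈ C.Φfin) :
    {a : P × ℤ × ℤ | a.1 = ν ∧ dPos C.finPos a ∧
        dPos C.finPos (-(dact C.pair C.ract (dwinv C.xact x) a)) ∧
        IsCorner C x a}.Finite :=
  statement5_general C x hxl ν hν

end DoubleAffineBruhat
end

section
/- Fix x ∈ W of positive level and ν ∈ Φ_fin. If (r, j) ∈ Γ_{x,ν} and j ≠ 0, then (p, j) ∈ Γ_{x,ν} for every integer p < r. -/
/-!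
Common framework for the double affine Weyl semigroup of Welch,
"Double Affine Bruhat Order".

Encoding conventions:
* `P` is the finite weight lattice `P_fin` (an additive abelian group) equipped with
  an integer-valued pairing `pair` (the normalized simply-laced pairing, identifying
  roots and coroots).
* A finite root is an element of the set `Φfin ⊆ P`; `finPos` is the set of
  positive finite roots.
* An affine root `ν + rδ` is encoded as the pair `(ν, r) : P × ℤ`.
* An affine weight `ζ = μ + mδ + lΛ₀ ∈ X` is encoded as `(μ, m, l) : P × ℤ × ℤ`.
* A double affine root `ν + rδ + jπ` is encoded as `(ν, r, j) : P × ℤ × ℤ`.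
* `G` is the affine Weyl group `W_aff` (an abstract group), acting on affine
  roots via `ract` and on `X` via `xact`; `saff α̃` is the reflection `s_{α̃}`,
  `Ytr λ` is the translation `Y^λ`.
* An element `X^ζ w̃` of the group `X ⋊ W_aff` (in particular of the double affine
  Weyl semigroup `W`, whose elements are those with `ζ` in the Tits cone) is encoded
  as the pair `(ζ, w̃) : (P × ℤ × ℤ) × G`.
-/

namespace DoubleAffineBruhat

variable {P G : Type} [AddCommGroup P] [Group G]

/-! For `x = X^ζ w̃`, `x⁻¹` sends `ν + qδ + kπ` to `γ + (c + q)δ + (k + ⟨ζ, ν⟩ + l q)π`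
with `γ`, `c` independent of `q, k` and `l > 0` the level of `x`. Lowering `q` therefore
lowers both the `δ`- and the `π`-coefficient of `x⁻¹(α)`, and a negative double affine root
stays negative under that; positivity of `ν + pδ + jπ` itself is automatic once `j > 0`. -/

theorem aPos_or_aPos_neg {finPos : Set P} {γ : P} (hγ : γ ∈ finPos ∨ -γ ∈ finPos) (s : ℤ) :
    aPos finPos (γ, s) ∨ aPos finPos (-γ, -s) := by
  unfold aPos
  rcases lt_trichotomy s 0 with hs | rfl | hs
  · exact Or.inr (Or.inl (by simpa using hs))
  · simpa using hγ
  · exact Or.inl (Or.inl hs)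

theorem dPos_of_snd_pos {finPos : Set P} {γ : P} (hγ : γ ∈ finPos ∨ -γ ∈ finPos) (s : ℤ)
    {k : ℤ} (hk : 0 < k) : dPos finPos (γ, s, k) := by
  rcases aPos_or_aPos_neg hγ s with h | h
  · exact Or.inl ⟨h, hk.le⟩
  · exact Or.inr ⟨h, hk⟩

theorem snd_snd_nonneg_of_dPos {finPos : Set P} {a : P × ℤ × ℤ} (ha : dPos finPos a) :
    0 ≤ a.2.2 := by
  rcases ha with ⟨-, h⟩ | ⟨-, h⟩
  exacts [h, h.le]

theorem dPos_neg_of_lt_of_le {finPos : Set P} {γ : P} (hγ : γ ∈ finPos ∨ -γ ∈ finPos)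
    {s s' k k' : ℤ} (hs : s' < s) (hk : k' ≤ k) (hneg : dPos finPos (-(γ, s, k))) :
    dPos finPos (-(γ, s', k')) := by
  simp only [dPos, Prod.neg_mk, neg_neg] at hneg ⊢
  rcases hneg with ⟨ha, hk0⟩ | ⟨-, hk0⟩
  · have hs₀ : s ≤ 0 := by rcases ha with h | ⟨h, -⟩ <;> dsimp only at h <;> omega
    exact Or.inl ⟨Or.inl (show 0 < -s' by omega), by omega⟩
  · rcases aPos_or_aPos_neg hγ s' with h | h
    · exact Or.inr ⟨h, by omega⟩
    · exact Or.inl ⟨h, by omega⟩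

namespace Ctx

variable (C : Ctx P G)

theorem mem_or_neg_mem_finPos {ν : P} (hν : ν ∈ C.Φfin) : ν ∈ C.finPos ∨ -ν ∈ C.finPos := by
  by_cases h : ν ∈ C.finPos
  · exact Or.inl h
  · exact Or.inr (not_not.mp (mt (C.pos_trichotomy ν hν).mpr h))

theorem xpair_neg_left (ζ : P × ℤ × ℤ) (a : P × ℤ) :
    xpair C.pair (-ζ) a = -xpair C.pair ζ a := by
  simp only [xpair, Prod.fst_neg, Prod.snd_neg, C.pair_neg_left]
  ring

/-- `W_aff` commutes with translation by `δ`, because `Y^λ` shifts by `-⟨λ, ν⟩δ` and the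
finite part fixes the `δ`-coefficient. -/
theorem ract_add_delta (g : G) (ν : P) (q : ℤ) :
    C.ract g (ν, q) = C.ract g (ν, 0) + (0, q) := by
  obtain ⟨lam, wf, rfl, hwf⟩ := C.decomp g
  rw [C.ract_mul, C.ract_mul, hwf ν q, hwf ν 0, C.Ytr_act, C.Ytr_act, Prod.mk_add_mk, add_zero]
  congr 1
  ring

theorem dact_dwinv (x : (P × ℤ × ℤ) × G) (ν : P) (q k : ℤ) :
    dact C.pair C.ract (dwinv C.xact x) (ν, q, k) =
      ((C.ract x.2⁻¹ (ν, 0)).1, (C.ract x.2⁻¹ (ν, 0)).2 + q, k + xpair C.pair x.1 (ν, q)) := by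
  have hπ : xpair C.pair (-C.xact x.2⁻¹ x.1) (C.ract x.2⁻¹ (ν, q)) = -xpair C.pair x.1 (ν, q) := by
    rw [C.xpair_neg_left, C.xact_pair]
  simp only [dact, dwinv]
  rw [hπ, sub_neg_eq_add, C.ract_add_delta x.2⁻¹ ν q]
  simp only [Prod.fst_add, Prod.snd_add, add_zero]

end Ctx

theorem statement18_general {P G : Type} [AddCommGroup P] [Group G] (C : Ctx P G)
    (x : (P × ℤ × ℤ) × G) (hxl : 0 < level x.1)
    (ν : P) (hν : ν ∈ C.Φfin)
    (r j : ℤ) (hmem : (r, j) ∈ Gamma C x ν) (hj : j ≠ 0) :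
    ∀ p : ℤ, p < r → (p, j) ∈ Gamma C x ν := by
  intro p hp
  obtain ⟨hpos, hneg⟩ := hmem
  have hj₀ : 0 < j := (snd_snd_nonneg_of_dPos hpos).lt_of_ne' hj
  refine ⟨dPos_of_snd_pos (C.mem_or_neg_mem_finPos hν) p hj₀, ?_⟩
  have hγ := C.mem_or_neg_mem_finPos (C.ract_root x.2⁻¹ (ν, 0) hν)
  have hπ : xpair C.pair x.1 (ν, p) ≤ xpair C.pair x.1 (ν, r) :=
    add_le_add_right (mul_le_mul_of_nonneg_left hp.le hxl.le) _
  rw [C.dact_dwinv] at hneg ⊢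
  exact dPos_neg_of_lt_of_le hγ (add_lt_add_right hp _) (add_le_add_right hπ j) hneg

/-- if `(r, j) ∈ Γ_{x,ν}` and `j ≠ 0`, then `(p, j) ∈ Γ_{x,ν}` for
every `p < r`. -/
theorem statement18 {P G : Type} [AddCommGroup P] [Group G] (C : Ctx P G)
    (x : (P × ℤ × ℤ) × G) (hxW : x.1 ∈ Tits P) (hxl : 0 < level x.1)
    (ν : P) (hν : ν ∈ C.Φfin)
    (r j : ℤ) (hmem : (r, j) ∈ Gamma C x ν) (hj : j ≠ 0) :
    ∀ p : ℤ, p < r → (p, j) ∈ Gamma C x ν :=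
  statement18_general C x hxl ν hν r j hmem hj

end DoubleAffineBruhat
end

section
/- Fix x = X^ζ w̃ ∈ W with ζ = μ + mδ + lΛ_0 of positive level l, and fix ν ∈ Φ_fin. If (r, −⟨μ,ν⟩ − lr) ∈ Γ_{x,ν}, then (p, −⟨μ,ν⟩ − lp) ∈ Γ_{x,ν} for every integer p < r; that is, if a point of the line j = −⟨ζ, ν + rδ⟩ lies in the lower graph, then so does every point of that line with smaller first coordinate. -/
/-!
Common framework for the double affine Weyl semigroup of Welch,
"Double Affine Bruhat Order".

Encoding conventions:
* `P` is the finite weight lattice `P_fin` (an additive abelian group) equipped with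
  an integer-valued pairing `pair` (the normalized simply-laced pairing, identifying
  roots and coroots).
* A finite root is an element of the set `Φfin ⊆ P`; `finPos` is the set of
  positive finite roots.
* An affine root `ν + rδ` is encoded as the pair `(ν, r) : P × ℤ`.
* An affine weight `ζ = μ + mδ + lΛ₀ ∈ X` is encoded as `(μ, m, l) : P × ℤ × ℤ`.
* A double affine root `ν + rδ + jπ` is encoded as `(ν, r, j) : P × ℤ × ℤ`.
* `G` is the affine Weyl group `W_aff` (an abstract group), acting on affine
  roots via `ract` and on `X` via `xact`; `saff α̃` is the reflection `s_{α̃}`,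
  `Ytr λ` is the translation `Y^λ`.
* An element `X^ζ w̃` of the group `X ⋊ W_aff` (in particular of the double affine
  Weyl semigroup `W`, whose elements are those with `ζ` in the Tits cone) is encoded
  as the pair `(ζ, w̃) : (P × ℤ × ℤ) × G`.
-/

namespace DoubleAffineBruhat

variable {P G : Type} [AddCommGroup P] [Group G]

/-!
On the line `j = -⟨ζ, ν + tδ⟩` the `π`-coordinate of `x⁻¹(ν + tδ + jπ)` vanishes, so this root
is just `g⁻¹(ν + tδ) = γ + (t - c)δ`. Lowering `t` keeps it negative, and, since `l > 0`, raises
`j`, which keeps `ν + tδ + jπ` positive.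
-/

lemma Ctx.aPos_or_aPos_neg (C : Ctx P G) {ν : P} (hν : ν ∈ C.Φfin) (p : ℤ) :
    aPos C.finPos (ν, p) ∨ aPos C.finPos (-ν, -p) := by
  rcases lt_trichotomy p 0 with hp | rfl | hp
  · exact Or.inr (Or.inl (neg_pos.mpr hp))
  · by_cases hpos : ν ∈ C.finPos
    · exact Or.inl (Or.inr ⟨rfl, hpos⟩)
    · exact Or.inr (Or.inr ⟨neg_zero, not_not.mp (mt (C.pos_trichotomy ν hν).mpr hpos)⟩)
  · exact Or.inl (Or.inl hp)

lemma Ctx.dPos_of_pos (C : Ctx P G) {ν : P} (hν : ν ∈ C.Φfin) (p : ℤ) {j : ℤ}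
    (hj : 0 < j) : dPos C.finPos (ν, p, j) :=
  (C.aPos_or_aPos_neg hν p).imp (fun h => ⟨h, hj.le⟩) (fun h => ⟨h, hj⟩)

lemma dPos.snd_snd_nonneg {finPos : Set P} {a : P × ℤ × ℤ} (h : dPos finPos a) :
    0 ≤ a.2.2 :=
  h.elim And.right (fun h => h.2.le)

lemma aPos.snd_nonneg {P : Type} {finPos : Set P} {a : P × ℤ} (h : aPos finPos a) : 0 ≤ a.2 :=
  h.elim le_of_lt (fun h => h.1.ge)

lemma dPos_neg_zero_iff {finPos : Set P} (a : P × ℤ) :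
    dPos finPos (-(a.1, a.2, 0)) ↔ aPos finPos (-a) := by
  simp only [dPos, Prod.neg_mk, neg_zero, le_refl, and_true, lt_self_iff_false, and_false,
    or_false]
  rfl

lemma Ctx.pair_neg_left_s19 (C : Ctx P G) (μ γ : P) : C.pair (-μ) γ = -C.pair μ γ := by
  have h := C.pair_add_left μ (-μ) γ
  have h0 := C.pair_add_left 0 0 γ
  simp only [add_neg_cancel, add_zero] at h h0
  omega

lemma Ctx.xpair_neg_s19 (C : Ctx P G) (ζ : P × ℤ × ℤ) (a : P × ℤ) :
    xpair C.pair (-ζ) a = -xpair C.pair ζ a := by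
  simp only [xpair, Prod.fst_neg, Prod.snd_neg, C.pair_neg_left_s19]
  ring

/-- `(X^ζ g)⁻¹ (α̃ + jπ) = g⁻¹(α̃) + (j + ⟨ζ, α̃⟩)π`. -/
lemma Ctx.dact_dwinv_s19 (C : Ctx P G) (ζ : P × ℤ × ℤ) (g : G) (a : P × ℤ) (j : ℤ) :
    dact C.pair C.ract (dwinv C.xact (ζ, g)) (a.1, a.2, j) =
      ((C.ract g⁻¹ a).1, (C.ract g⁻¹ a).2, j + xpair C.pair ζ a) := by
  simp only [dact, dwinv, C.xpair_neg_s19, C.xact_pair, sub_neg_eq_add]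

lemma Ctx.mem_Gamma_line_iff (C : Ctx P G) (μ : P) (m l : ℤ) (g : G) (ν : P) (t : ℤ) :
    (t, -(C.pair μ ν) - l * t) ∈ Gamma C ((μ, m, l), g) ν ↔
      dPos C.finPos (ν, t, -(C.pair μ ν) - l * t) ∧ aPos C.finPos (-(C.ract g⁻¹ (ν, t))) := by
  have hzero : -(C.pair μ ν) - l * t + xpair C.pair (μ, m, l) (ν, t) = 0 := by
    simp only [xpair]
    ring
  change _ ∧ dPos C.finPos (-(dact _ _ _ ((ν, t).1, (ν, t).2, _))) ↔ _
  rw [C.dact_dwinv_s19, hzero, dPos_neg_zero_iff]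

lemma Ctx.exists_ract_eq_shift (C : Ctx P G) (g : G) (ν : P) :
    ∃ (γ : P) (c : ℤ), ∀ t : ℤ, C.ract g (ν, t) = (γ, t - c) := by
  obtain ⟨lam, w, rfl, hw⟩ := C.decomp g
  exact ⟨(C.ract w (ν, 0)).1, C.pair lam (C.ract w (ν, 0)).1, fun t => by
    rw [C.ract_mul, hw, C.Ytr_act]⟩

/-- if a point `(r, -⟨μ,ν⟩ - lr)` of the line `j = -⟨ζ, ν + rδ⟩` lies
in `Γ_{x,ν}`, then so does every point of that line with smaller first coordinate. -/
theorem statement19 {P G : Type} [AddCommGroup P] [Group G] (C : Ctx P G)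
    (μ : P) (m l : ℤ) (hl : 0 < l) (g : G)
    (x : (P × ℤ × ℤ) × G) (hx : x = ((μ, m, l), g))
    (ν : P) (hν : ν ∈ C.Φfin)
    (r : ℤ) (hmem : (r, -(C.pair μ ν) - l * r) ∈ Gamma C x ν) :
    ∀ p : ℤ, p < r → (p, -(C.pair μ ν) - l * p) ∈ Gamma C x ν := by
  intro p hp
  subst hx
  rw [C.mem_Gamma_line_iff] at hmem ⊢
  obtain ⟨hpos, hneg⟩ := hmem
  obtain ⟨γ, c, hshift⟩ := C.exists_ract_eq_shift g⁻¹ ν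
  rw [hshift, Prod.neg_mk] at hneg ⊢
  have hrc : r ≤ c := by simpa using hneg.snd_nonneg
  have hjp : 0 < -(C.pair μ ν) - l * p := by nlinarith [hpos.snd_snd_nonneg]
  exact ⟨C.dPos_of_pos hν p hjp, Or.inl (by simp only; omega)⟩

end DoubleAffineBruhat
end
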